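/- arXiv:1801.04965 — 2 statements merged into one kernel-verified Lean document; each statement's English description precedes it below -/
import Mathlib

section
/- Let u and v be nonadjacent vertices of a graph G and let G_{u,v,4} be obtained by adding a path u, x_1, x_2, x_3, x_4, v with four new internal vertices. Then γ(G) ≤ γ(G_{u,v,4}) ≤ γ(G) + 2, and γ(G_{u,v,4}) = γ(G) if and only if γ(G − {u,v}) = γ(G) − 2. -/
/-- `D` is a dominating set of `G`: every vertex not in `D` has a neighbor in `D`. -/
def isDomSet {V : Type*} (G : SimpleGraph V) (D : Finset V) : Prop :=
  ∀ v, v ∉ D → ∃ u ∈ D, G.Adj u v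

/-- The domination number: minimum cardinality of a dominating set. -/
noncomputable def domNum {V : Type*} (G : SimpleGraph V) : ℕ :=
  sInf {n | ∃ D : Finset V, D.card = n ∧ isDomSet G D}

/-- The `(u,v)`-path-addition graph `G_{u,v,k}`: add an internally disjoint path with
`k` internal vertices between `u` and `v`. -/
noncomputable def pathAdd {V : Type*} (G : SimpleGraph V) (u v : V) (k : ℕ) :
    SimpleGraph (V ⊕ Fin k) :=
  SimpleGraph.fromRel (fun a b =>
    match a, b with
    | Sum.inl x, Sum.inl y => G.Adj x y
    | Sum.inl x, Sum.inr i => (x = u ∧ (i : ℕ) = 0) ∨ (x = v ∧ (i : ℕ) = k - 1)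
    | Sum.inr _, Sum.inl _ => False
    | Sum.inr i, Sum.inr j => (j : ℕ) = (i : ℕ) + 1)

section aux
variable {V : Type*}

lemma aux_domNum_le [Fintype V] (G : SimpleGraph V) {D : Finset V} (hD : isDomSet G D) :
    domNum G ≤ D.card :=
  Nat.sInf_le ⟨D, rfl, hD⟩

lemma aux_exists [Fintype V] (G : SimpleGraph V) :
    ∃ D : Finset V, D.card = domNum G ∧ isDomSet G D := by
  classical
  have hne : {n | ∃ D : Finset V, D.card = n ∧ isDomSet G D}.Nonempty :=
    ⟨(Finset.univ : Finset V).card, Finset.univ, rfl,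
      fun w hw => absurd (Finset.mem_univ w) hw⟩
  exact Nat.sInf_mem hne

variable (G : SimpleGraph V) (u v : V)

lemma pa_inl_inl (x y : V) :
    (pathAdd G u v 4).Adj (Sum.inl x) (Sum.inl y) ↔ G.Adj x y := by
  unfold pathAdd
  rw [SimpleGraph.fromRel_adj]
  constructor
  · rintro ⟨-, h | h⟩
    · exact h
    · exact h.symm
  · exact fun hx => ⟨fun hc => hx.ne (Sum.inl_injective hc), Or.inl hx⟩

lemma pa_inl_inr (x : V) (i : Fin 4) :
    (pathAdd G u v 4).Adj (Sum.inl x) (Sum.inr i) ↔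
      ((x = u ∧ (i : ℕ) = 0) ∨ (x = v ∧ (i : ℕ) = 3)) := by
  unfold pathAdd
  rw [SimpleGraph.fromRel_adj]
  constructor
  · rintro ⟨-, h | h⟩
    · exact h
    · exact absurd h id
  · exact fun hx => ⟨by simp, Or.inl hx⟩

lemma pa_inr_inr (i j : Fin 4) :
    (pathAdd G u v 4).Adj (Sum.inr i) (Sum.inr j) ↔
      ((j : ℕ) = (i : ℕ) + 1 ∨ (i : ℕ) = (j : ℕ) + 1) := by
  unfold pathAdd
  rw [SimpleGraph.fromRel_adj]
  constructor
  · rintro ⟨-, h | h⟩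
    · exact Or.inl h
    · exact Or.inr h
  · intro hx
    refine ⟨fun hc => ?_, ?_⟩
    · cases Sum.inr_injective hc
      omega
    · exact hx

/-- The structural projection lemma: any dominating set of the path-added graph projects
to a dominating set of `G` of no larger size; and if it is optimal, we extract a small
dominating set of the doubly-deleted graph. -/
lemma aux_proj [Fintype V] (hne : u ≠ v)
    {D' : Finset (V ⊕ Fin 4)} (hD' : isDomSet (pathAdd G u v 4) D') :
    domNum G ≤ D'.card ∧
    (D'.card ≤ domNum G →
      ∃ B : Finset ↥{w : V | w ≠ u ∧ w ≠ v}, B.card + 2 = D'.card ∧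
        isDomSet (G.induce {w | w ≠ u ∧ w ≠ v}) B) := by
  classical
  set A : Finset V := D'.preimage Sum.inl Sum.inl_injective.injOn with hAdef
  set T : Finset (Fin 4) := D'.preimage Sum.inr Sum.inr_injective.injOn with hTdef
  have hmemA : ∀ a : V, a ∈ A ↔ Sum.inl a ∈ D' := fun a => Finset.mem_preimage
  have hmemT : ∀ i : Fin 4, i ∈ T ↔ Sum.inr i ∈ D' := fun i => Finset.mem_preimage
  have hcard : D'.card = A.card + T.card := by
    have hun : A.image Sum.inl ∪ T.image Sum.inr = D' := by
      ext e
      cases e with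
      | inl a =>
          simp only [Finset.mem_union, Finset.mem_image, Sum.inl.injEq]
          constructor
          · rintro (⟨b, hb, rfl⟩ | ⟨i, hi, hie⟩)
            · exact (hmemA b).mp hb
            · exact absurd hie (by simp)
          · intro hmem
            exact Or.inl ⟨a, (hmemA a).mpr hmem, rfl⟩
      | inr i =>
          simp only [Finset.mem_union, Finset.mem_image, Sum.inr.injEq]
          constructor
          · rintro (⟨b, hb, hie⟩ | ⟨j, hj, rfl⟩)
            · exact absurd hie (by simp)
            · exact (hmemT j).mp hj
          · intro hmem
            exact Or.inr ⟨i, (hmemT i).mpr hmem, rfl⟩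
    have hdisj : Disjoint (A.image Sum.inl) (T.image Sum.inr) := by
      rw [Finset.disjoint_left]
      rintro e he1 he2
      obtain ⟨a, -, rfl⟩ := Finset.mem_image.mp he1
      obtain ⟨i, -, hie⟩ := Finset.mem_image.mp he2
      exact absurd hie (by simp)
    rw [← hun, Finset.card_union_of_disjoint hdisj,
      Finset.card_image_of_injective _ Sum.inl_injective,
      Finset.card_image_of_injective _ Sum.inr_injective]
  have hA_dom : ∀ w : V, w ≠ u → w ≠ v → w ∉ A → ∃ a ∈ A, G.Adj a w := by
    intro w hwu hwv hwA
    obtain ⟨e, heD, hadj⟩ := hD' (Sum.inl w) (fun hc => hwA ((hmemA w).mpr hc))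
    cases e with
    | inl a => exact ⟨a, (hmemA a).mpr heD, (pa_inl_inl G u v a w).mp hadj⟩
    | inr i =>
        rcases (pa_inl_inr G u v w i).mp hadj.symm with ⟨hw, -⟩ | ⟨hw, -⟩
        · exact absurd hw hwu
        · exact absurd hw hwv
  have hu_dom : ¬(u ∈ A ∨ ∃ a ∈ A, G.Adj a u) → (0 : Fin 4) ∈ T := by
    intro hP
    push_neg at hP
    obtain ⟨huA, hnA⟩ := hP
    obtain ⟨e, heD, hadj⟩ := hD' (Sum.inl u) (fun hc => huA ((hmemA u).mpr hc))
    cases e with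
    | inl a => exact absurd ((pa_inl_inl G u v a u).mp hadj) (hnA a ((hmemA a).mpr heD))
    | inr i =>
        rcases (pa_inl_inr G u v u i).mp hadj.symm with ⟨-, hi⟩ | ⟨huv, -⟩
        · have h0 : i = 0 := Fin.ext (by simpa using hi)
          exact (hmemT 0).mpr (h0 ▸ heD)
        · exact absurd huv hne
  have hv_dom : ¬(v ∈ A ∨ ∃ a ∈ A, G.Adj a v) → (3 : Fin 4) ∈ T := by
    intro hP
    push_neg at hP
    obtain ⟨hvA, hnA⟩ := hP
    obtain ⟨e, heD, hadj⟩ := hD' (Sum.inl v) (fun hc => hvA ((hmemA v).mpr hc))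
    cases e with
    | inl a => exact absurd ((pa_inl_inl G u v a v).mp hadj) (hnA a ((hmemA a).mpr heD))
    | inr i =>
        rcases (pa_inl_inr G u v v i).mp hadj.symm with ⟨hvu, -⟩ | ⟨-, hi⟩
        · exact absurd hvu.symm hne
        · have h3 : i = 3 := Fin.ext (by simpa using hi)
          exact (hmemT 3).mpr (h3 ▸ heD)
  have hx1 : ∃ j ∈ T, (j : ℕ) ≤ 2 := by
    by_cases h1 : Sum.inr (1 : Fin 4) ∈ D'
    · exact ⟨1, (hmemT 1).mpr h1, by norm_num⟩
    · obtain ⟨e, heD, hadj⟩ := hD' (Sum.inr 1) h1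
      cases e with
      | inl x =>
          rcases (pa_inl_inr G u v x 1).mp hadj with ⟨-, hi⟩ | ⟨-, hi⟩ <;>
            simp at hi
      | inr j =>
          refine ⟨j, (hmemT j).mpr heD, ?_⟩
          have hval : ((1 : Fin 4) : ℕ) = 1 := rfl
          rcases (pa_inr_inr G u v j 1).mp hadj with hj | hj <;> omega
  have hx2 : ∃ j ∈ T, 1 ≤ (j : ℕ) := by
    by_cases h2 : Sum.inr (2 : Fin 4) ∈ D'
    · exact ⟨2, (hmemT 2).mpr h2, by norm_num⟩
    · obtain ⟨e, heD, hadj⟩ := hD' (Sum.inr 2) h2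
      cases e with
      | inl x =>
          rcases (pa_inl_inr G u v x 2).mp hadj with ⟨-, hi⟩ | ⟨-, hi⟩ <;>
            simp at hi
      | inr j =>
          refine ⟨j, (hmemT j).mpr heD, ?_⟩
          have hval : ((2 : Fin 4) : ℕ) = 2 := rfl
          rcases (pa_inr_inr G u v j 2).mp hadj with hj | hj <;> omega
  -- domination bounds for G
  have bA : (u ∈ A ∨ ∃ a ∈ A, G.Adj a u) → (v ∈ A ∨ ∃ a ∈ A, G.Adj a v) →
      domNum G ≤ A.card := by
    intro hPu hPv
    refine aux_domNum_le G ?_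
    intro w hw
    by_cases hwu : w = u
    · subst hwu
      rcases hPu with h' | h'
      · exact absurd h' hw
      · exact h'
    · by_cases hwv : w = v
      · subst hwv
        rcases hPv with h' | h'
        · exact absurd h' hw
        · exact h'
      · exact hA_dom w hwu hwv hw
  have bAv : (u ∈ A ∨ ∃ a ∈ A, G.Adj a u) → domNum G ≤ A.card + 1 := by
    intro hPu
    have hdom : isDomSet G (insert v A) := by
      intro w hw
      rw [Finset.mem_insert] at hw
      push_neg at hw
      by_cases hwu : w = u
      · subst hwu
        rcases hPu with h' | h'
        · exact absurd h' hw.2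
        · obtain ⟨a, ha, hadj⟩ := h'
          exact ⟨a, Finset.mem_insert_of_mem ha, hadj⟩
      · obtain ⟨a, ha, hadj⟩ := hA_dom w hwu hw.1 hw.2
        exact ⟨a, Finset.mem_insert_of_mem ha, hadj⟩
    exact le_trans (aux_domNum_le G hdom) (Finset.card_insert_le _ _)
  have bAu : (v ∈ A ∨ ∃ a ∈ A, G.Adj a v) → domNum G ≤ A.card + 1 := by
    intro hPv
    have hdom : isDomSet G (insert u A) := by
      intro w hw
      rw [Finset.mem_insert] at hw
      push_neg at hw
      by_cases hwv : w = v
      · subst hwv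
        rcases hPv with h' | h'
        · exact absurd h' hw.2
        · obtain ⟨a, ha, hadj⟩ := h'
          exact ⟨a, Finset.mem_insert_of_mem ha, hadj⟩
      · obtain ⟨a, ha, hadj⟩ := hA_dom w hw.1 hwv hw.2
        exact ⟨a, Finset.mem_insert_of_mem ha, hadj⟩
    exact le_trans (aux_domNum_le G hdom) (Finset.card_insert_le _ _)
  have buv : domNum G ≤ A.card + 2 := by
    have hdom : isDomSet G (insert u (insert v A)) := by
      intro w hw
      simp only [Finset.mem_insert] at hw
      push_neg at hw
      obtain ⟨a, ha, hadj⟩ := hA_dom w hw.1 hw.2.1 hw.2.2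
      exact ⟨a, by simp [ha], hadj⟩
    refine le_trans (aux_domNum_le G hdom) ?_
    calc (insert u (insert v A)).card ≤ (insert v A).card + 1 := Finset.card_insert_le _ _
      _ ≤ A.card + 1 + 1 := Nat.add_le_add_right (Finset.card_insert_le _ _) 1
      _ = A.card + 2 := by ring
  have part1 : domNum G ≤ D'.card := by
    by_cases hPu : u ∈ A ∨ ∃ a ∈ A, G.Adj a u
    · by_cases hPv : v ∈ A ∨ ∃ a ∈ A, G.Adj a v
      · have := bA hPu hPv
        omega
      · have h3T := hv_dom hPv
        have hT1 : 1 ≤ T.card := Finset.card_pos.mpr ⟨3, h3T⟩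
        have := bAv hPu
        omega
    · by_cases hPv : v ∈ A ∨ ∃ a ∈ A, G.Adj a v
      · have h0T := hu_dom hPu
        have hT1 : 1 ≤ T.card := Finset.card_pos.mpr ⟨0, h0T⟩
        have := bAu hPv
        omega
      · have h0T := hu_dom hPu
        have h3T := hv_dom hPv
        have hT2 : 2 ≤ T.card := by
          have hsub : ({0, 3} : Finset (Fin 4)) ⊆ T := by
            intro x hx
            rcases Finset.mem_insert.mp hx with rfl | hx
            · exact h0T
            · rw [Finset.mem_singleton] at hx
              subst hx
              exact h3T
          calc 2 = ({0, 3} : Finset (Fin 4)).card := by decide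
            _ ≤ T.card := Finset.card_le_card hsub
        omega
  refine ⟨part1, fun hle => ?_⟩
  have hTle2 : T.card ≤ 2 := by omega
  have hTge2 : 2 ≤ T.card := by
    by_contra hT1
    push_neg at hT1
    have hT1' : T.card ≤ 1 := by omega
    obtain ⟨j1, hj1, hv1⟩ := hx1
    obtain ⟨j2, hj2, hv2⟩ := hx2
    have h3 : (3 : Fin 4) ∉ T := by
      intro h3
      have := Finset.card_le_one.mp hT1' _ hj1 _ h3
      subst this
      exact absurd hv1 (by decide)
    have h0 : (0 : Fin 4) ∉ T := by
      intro h0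
      have := Finset.card_le_one.mp hT1' _ hj2 _ h0
      subst this
      exact absurd hv2 (by decide)
    have hPu : u ∈ A ∨ ∃ a ∈ A, G.Adj a u := by
      by_contra hP
      exact h0 (hu_dom hP)
    have hPv : v ∈ A ∨ ∃ a ∈ A, G.Adj a v := by
      by_contra hP
      exact h3 (hv_dom hP)
    have := bA hPu hPv
    have hTz : T.card = 0 := by omega
    rw [Finset.card_eq_zero] at hTz
    rw [hTz] at hj1
    exact absurd hj1 (Finset.notMem_empty _)
  have hT2 : T.card = 2 := le_antisymm hTle2 hTge2
  have hPu : ¬(u ∈ A ∨ ∃ a ∈ A, G.Adj a u) := by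
    intro hPu
    have := bAv hPu
    omega
  have hPv : ¬(v ∈ A ∨ ∃ a ∈ A, G.Adj a v) := by
    intro hPv
    have := bAu hPv
    omega
  push_neg at hPu hPv
  obtain ⟨huA, -⟩ := hPu
  obtain ⟨hvA, -⟩ := hPv
  refine ⟨A.subtype (· ∈ {w : V | w ≠ u ∧ w ≠ v}), ?_, ?_⟩
  · have hcs : (A.subtype (· ∈ {w : V | w ≠ u ∧ w ≠ v})).card = A.card := by
      rw [Finset.card_subtype, Finset.filter_true_of_mem]
      intro a ha
      exact ⟨fun hc => huA (hc ▸ ha), fun hc => hvA (hc ▸ ha)⟩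
    omega
  · rintro ⟨w, hw⟩ hwB
    rw [Finset.mem_subtype] at hwB
    obtain ⟨a, ha, hadj⟩ := hA_dom w hw.1 hw.2 hwB
    refine ⟨⟨a, ⟨fun hc => huA (hc ▸ ha), fun hc => hvA (hc ▸ ha)⟩⟩,
      Finset.mem_subtype.mpr ha, ?_⟩
    simpa using hadj

end aux

section aux2
variable {V : Type*} [Fintype V] (G : SimpleGraph V) (u v : V)

lemma aux_upper : domNum (pathAdd G u v 4) ≤ domNum G + 2 := by
  classical
  obtain ⟨D, hc, hD⟩ := aux_exists G
  set D' : Finset (V ⊕ Fin 4) :=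
    D.image Sum.inl ∪ {Sum.inr 1, Sum.inr 3} with hD'def
  have hdom : isDomSet (pathAdd G u v 4) D' := by
    intro e he
    cases e with
    | inl w =>
        have hwD : w ∉ D := fun hw =>
          he (Finset.mem_union_left _ (Finset.mem_image_of_mem _ hw))
        obtain ⟨a, ha, hadj⟩ := hD w hwD
        exact ⟨Sum.inl a, Finset.mem_union_left _ (Finset.mem_image_of_mem _ ha),
          (pa_inl_inl G u v a w).mpr hadj⟩
    | inr i =>
        have h1mem : Sum.inr (1 : Fin 4) ∈ D' := by
          apply Finset.mem_union_right
          simp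
        have h3mem : Sum.inr (3 : Fin 4) ∈ D' := by
          apply Finset.mem_union_right
          simp
        have hv1 : ((1 : Fin 4) : ℕ) = 1 := rfl
        have hv3 : ((3 : Fin 4) : ℕ) = 3 := rfl
        have hi : (i : ℕ) = 0 ∨ (i : ℕ) = 1 ∨ (i : ℕ) = 2 ∨ (i : ℕ) = 3 := by omega
        rcases hi with hi | hi | hi | hi
        · exact ⟨Sum.inr 1, h1mem, (pa_inr_inr G u v 1 i).mpr (Or.inr (by omega))⟩
        · have : i = 1 := Fin.ext (by omega)
          subst this
          exact absurd h1mem he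
        · exact ⟨Sum.inr 1, h1mem, (pa_inr_inr G u v 1 i).mpr (Or.inl (by omega))⟩
        · have : i = 3 := Fin.ext (by omega)
          subst this
          exact absurd h3mem he
  refine le_trans (aux_domNum_le _ hdom) ?_
  calc D'.card ≤ (D.image Sum.inl).card + ({Sum.inr 1, Sum.inr 3} : Finset (V ⊕ Fin 4)).card :=
        Finset.card_union_le _ _
    _ ≤ D.card + 2 := by
        rw [Finset.card_image_of_injective _ Sum.inl_injective]
        have : ({Sum.inr 1, Sum.inr 3} : Finset (V ⊕ Fin 4)).card ≤ 2 :=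
          le_trans (Finset.card_insert_le _ _) (by simp)
        omega
    _ = domNum G + 2 := by rw [hc]

lemma aux_indu_ge : domNum G ≤ domNum (G.induce {w | w ≠ u ∧ w ≠ v}) + 2 := by
  classical
  haveI : Fintype ↥{w : V | w ≠ u ∧ w ≠ v} := Fintype.ofFinite _
  obtain ⟨D0, hc0, hD0⟩ := aux_exists (G.induce {w | w ≠ u ∧ w ≠ v})
  have hdom : isDomSet G (insert u (insert v (D0.image Subtype.val))) := by
    intro w hw
    simp only [Finset.mem_insert] at hw
    push_neg at hw
    obtain ⟨hwu, hwv, hwim⟩ := hw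
    have hwmem : (⟨w, ⟨hwu, hwv⟩⟩ : ↥{w : V | w ≠ u ∧ w ≠ v}) ∉ D0 := by
      intro hc
      exact hwim (Finset.mem_image_of_mem _ hc)
    obtain ⟨a, ha, hadj⟩ := hD0 _ hwmem
    refine ⟨a.val, by simp [Finset.mem_image_of_mem _ ha], ?_⟩
    simpa using hadj
  refine le_trans (aux_domNum_le G hdom) ?_
  calc (insert u (insert v (D0.image Subtype.val))).card
      ≤ (insert v (D0.image Subtype.val)).card + 1 := Finset.card_insert_le _ _
    _ ≤ (D0.image Subtype.val).card + 1 + 1 := Nat.add_le_add_right (Finset.card_insert_le _ _) 1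
    _ ≤ D0.card + 2 := by
        have := Finset.card_image_le (f := Subtype.val) (s := D0)
        omega
    _ = domNum (G.induce {w | w ≠ u ∧ w ≠ v}) + 2 := by rw [hc0]

end aux2

theorem stmt17 {V : Type*} [Fintype V] (G : SimpleGraph V) (u v : V)
    (hne : u ≠ v) (h : ¬G.Adj u v) :
    domNum G ≤ domNum (pathAdd G u v 4) ∧
    domNum (pathAdd G u v 4) ≤ domNum G + 2 ∧
    (domNum (pathAdd G u v 4) = domNum G ↔
      domNum (G.induce {w | w ≠ u ∧ w ≠ v}) = domNum G - 2) := by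
  classical
  haveI : Fintype ↥{w : V | w ≠ u ∧ w ≠ v} := Fintype.ofFinite _
  obtain ⟨D', hc', hD'⟩ := aux_exists (pathAdd G u v 4)
  obtain ⟨hlow, htight⟩ := aux_proj G u v hne hD'
  have hlower : domNum G ≤ domNum (pathAdd G u v 4) := hc' ▸ hlow
  have hindu := aux_indu_ge G u v
  refine ⟨hlower, aux_upper G u v, ?_, ?_⟩
  · -- forward direction
    intro heq
    obtain ⟨B, hBc, hB⟩ := htight (by omega)
    have h1 : domNum (G.induce {w | w ≠ u ∧ w ≠ v}) ≤ B.card := aux_domNum_le _ hB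
    omega
  · -- backward direction
    intro heq
    have hge2 : 2 ≤ domNum G := by
      by_contra hlt
      push_neg at hlt
      obtain ⟨D, hDc, hD⟩ := aux_exists G
      have hcase : domNum G = 0 ∨ domNum G = 1 := by omega
      rcases hcase with h0 | h1
      · rw [h0, Finset.card_eq_zero] at hDc
        subst hDc
        obtain ⟨a, ha, -⟩ := hD u (Finset.notMem_empty u)
        exact absurd ha (Finset.notMem_empty a)
      · rw [h1, Finset.card_eq_one] at hDc
        obtain ⟨w, rfl⟩ := hDc
        have hwu : w ≠ u := by
          rintro rfl
          obtain ⟨a, ha, hadj⟩ := hD v (by simpa [Finset.mem_singleton] using hne.symm)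
          rw [Finset.mem_singleton] at ha
          subst ha
          exact h hadj
        have hwv : w ≠ v := by
          rintro rfl
          obtain ⟨a, ha, hadj⟩ := hD u (by simpa [Finset.mem_singleton] using hne)
          rw [Finset.mem_singleton] at ha
          subst ha
          exact h hadj.symm
        have h0 : domNum (G.induce {w | w ≠ u ∧ w ≠ v}) = 0 := by omega
        obtain ⟨D0, hD0c, hD0⟩ := aux_exists (G.induce {w | w ≠ u ∧ w ≠ v})
        rw [h0, Finset.card_eq_zero] at hD0c
        subst hD0c
        obtain ⟨a, ha, -⟩ := hD0 ⟨w, ⟨hwu, hwv⟩⟩ (Finset.notMem_empty _)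
        exact absurd ha (Finset.notMem_empty a)
    obtain ⟨D0, hD0c, hD0⟩ := aux_exists (G.induce {w | w ≠ u ∧ w ≠ v})
    set D2 : Finset (V ⊕ Fin 4) :=
      insert (Sum.inr 0) (insert (Sum.inr 3) (D0.image (fun x => Sum.inl x.val))) with hD2def
    have h0mem : Sum.inr (0 : Fin 4) ∈ D2 := Finset.mem_insert_self _ _
    have h3mem : Sum.inr (3 : Fin 4) ∈ D2 :=
      Finset.mem_insert_of_mem (Finset.mem_insert_self _ _)
    have hdom : isDomSet (pathAdd G u v 4) D2 := by
      intro e he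
      cases e with
      | inl w =>
          by_cases hwu : w = u
          · exact ⟨Sum.inr 0, h0mem, ((pa_inl_inr G u v w 0).mpr (Or.inl ⟨hwu, rfl⟩)).symm⟩
          · by_cases hwv : w = v
            · exact ⟨Sum.inr 3, h3mem, ((pa_inl_inr G u v w 3).mpr (Or.inr ⟨hwv, rfl⟩)).symm⟩
            · have hwmem : (⟨w, ⟨hwu, hwv⟩⟩ : ↥{w : V | w ≠ u ∧ w ≠ v}) ∉ D0 := by
                intro hc
                exact he (by
                  apply Finset.mem_insert_of_mem
                  apply Finset.mem_insert_of_mem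
                  exact Finset.mem_image_of_mem _ hc)
              obtain ⟨a, ha, hadj⟩ := hD0 _ hwmem
              refine ⟨Sum.inl a.val, ?_, (pa_inl_inl G u v a.val w).mpr (by simpa using hadj)⟩
              apply Finset.mem_insert_of_mem
              apply Finset.mem_insert_of_mem
              exact Finset.mem_image_of_mem _ ha
      | inr i =>
          have hv0 : ((0 : Fin 4) : ℕ) = 0 := rfl
          have hv3 : ((3 : Fin 4) : ℕ) = 3 := rfl
          have hi : (i : ℕ) = 0 ∨ (i : ℕ) = 1 ∨ (i : ℕ) = 2 ∨ (i : ℕ) = 3 := by omega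
          rcases hi with hi | hi | hi | hi
          · have : i = 0 := Fin.ext (by omega)
            subst this
            exact absurd h0mem he
          · exact ⟨Sum.inr 0, h0mem, (pa_inr_inr G u v 0 i).mpr (Or.inl (by omega))⟩
          · exact ⟨Sum.inr 3, h3mem, (pa_inr_inr G u v 3 i).mpr (Or.inr (by omega))⟩
          · have : i = 3 := Fin.ext (by omega)
            subst this
            exact absurd h3mem he
    have hcard2 : D2.card ≤ D0.card + 2 := by
      calc D2.card ≤ (insert (Sum.inr 3) (D0.image (fun x => Sum.inl x.val))).card + 1 :=
            Finset.card_insert_le _ _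
        _ ≤ (D0.image (fun x => Sum.inl x.val)).card + 1 + 1 :=
            Nat.add_le_add_right (Finset.card_insert_le _ _) 1
        _ ≤ D0.card + 1 + 1 := by
            have h' : (D0.image (fun x => (Sum.inl x.val : V ⊕ Fin 4))).card ≤ D0.card :=
              Finset.card_image_le
            omega
        _ = D0.card + 2 := by omega
    have hupper2 : domNum (pathAdd G u v 4) ≤ domNum G := by
      refine le_trans (aux_domNum_le _ hdom) ?_
      omega
    omega
end

section
/- Let u and v be nonadjacent vertices of a graph G. If k ≥ 5 and G_{u,v,k} is obtained by adding a path with k internal vertices between u and v, then γ(G_{u,v,k}) > γ(G). -/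
section Domination

variable {V : Type*} (G : SimpleGraph V)

theorem domNum_le_card {D : Finset V} (hD : isDomSet G D) : domNum G ≤ D.card :=
  Nat.sInf_le ⟨D, rfl, hD⟩

theorem exists_isDomSet_card_eq_domNum [Fintype V] : ∃ D, isDomSet G D ∧ D.card = domNum G := by
  have hne : {n | ∃ D : Finset V, D.card = n ∧ isDomSet G D}.Nonempty :=
    ⟨_, Finset.univ, rfl, fun w hw => absurd (Finset.mem_univ w) hw⟩
  obtain ⟨D, hcard, hD⟩ := Nat.sInf_mem hne
  exact ⟨D, hD, hcard⟩

end Domination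

section PathAdd

variable {V : Type*} (G : SimpleGraph V) (u v : V) {k : ℕ}

@[simp]
theorem pathAdd_adj_inl_inl {x y : V} : (pathAdd G u v k).Adj (.inl x) (.inl y) ↔ G.Adj x y := by
  simp only [pathAdd, SimpleGraph.fromRel_adj, ne_eq, Sum.inl.injEq]
  exact ⟨fun ⟨_, h⟩ => h.elim id G.adj_symm, fun h => ⟨h.ne, .inl h⟩⟩

@[simp]
theorem pathAdd_adj_inl_inr {x : V} {i : Fin k} :
    (pathAdd G u v k).Adj (.inl x) (.inr i) ↔ x = u ∧ (i : ℕ) = 0 ∨ x = v ∧ (i : ℕ) = k - 1 := by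
  simp only [pathAdd, SimpleGraph.fromRel_adj, ne_eq, reduceCtorEq, not_false_eq_true, or_false,
    true_and]

@[simp]
theorem pathAdd_adj_inr_inl {x : V} {i : Fin k} :
    (pathAdd G u v k).Adj (.inr i) (.inl x) ↔ x = u ∧ (i : ℕ) = 0 ∨ x = v ∧ (i : ℕ) = k - 1 :=
  (pathAdd G u v k).adj_comm _ _ |>.trans (pathAdd_adj_inl_inr G u v)

@[simp]
theorem pathAdd_adj_inr_inr {i j : Fin k} :
    (pathAdd G u v k).Adj (.inr i) (.inr j) ↔ (j : ℕ) = i + 1 ∨ (i : ℕ) = j + 1 := by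
  simp only [pathAdd, SimpleGraph.fromRel_adj, ne_eq, Sum.inr.injEq, and_iff_right_iff_imp]
  omega

/-- The path vertices `x_2, …, x_{k-1}`, i.e. those with no neighbour in `G`. -/
def IsInnerPathVertex (k : ℕ) : V ⊕ Fin k → Prop
  | .inl _ => False
  | .inr i => (i : ℕ) ≠ 0 ∧ (i : ℕ) ≠ k - 1

instance : DecidablePred (IsInnerPathVertex (V := V) k)
  | .inl _ => inferInstanceAs (Decidable False)
  | .inr _ => inferInstanceAs (Decidable (_ ∧ _))

/-- `x_1 ↦ u` and `x_k ↦ v`; the values at inner path vertices are irrelevant. -/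
def collapsePath (k : ℕ) : V ⊕ Fin k → V
  | .inl x => x
  | .inr i => if (i : ℕ) = 0 then u else v

theorem not_isInnerPathVertex_and_collapsePath_of_adj_inl (hk : 2 ≤ k) {z : V ⊕ Fin k} {w : V}
    (h : (pathAdd G u v k).Adj z (.inl w)) :
    ¬IsInnerPathVertex k z ∧ (collapsePath u v k z = w ∨ G.Adj (collapsePath u v k z) w) := by
  cases z with
  | inl y => exact ⟨id, .inr ((pathAdd_adj_inl_inl G u v).1 h)⟩
  | inr i =>
    rw [pathAdd_adj_inr_inl] at h
    refine ⟨fun hi => ?_, .inl ?_⟩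
    · rcases h with ⟨-, h⟩ | ⟨-, h⟩ <;> simp_all [IsInnerPathVertex]
    · rcases h with ⟨rfl, h⟩ | ⟨rfl, h⟩
      · simp [collapsePath, h]
      · simp [collapsePath, show (i : ℕ) ≠ 0 by omega]

theorem isDomSet_image_collapsePath [DecidableEq V] (hk : 2 ≤ k) {D : Finset (V ⊕ Fin k)}
    (hD : isDomSet (pathAdd G u v k) D) :
    isDomSet G ((D.filter (¬IsInnerPathVertex k ·)).image (collapsePath u v k)) := by
  intro w hw
  have hkept : ∀ z ∈ D, ¬IsInnerPathVertex k z →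
      collapsePath u v k z ∈ (D.filter (¬IsInnerPathVertex k ·)).image (collapsePath u v k) :=
    fun z hz hz' => Finset.mem_image_of_mem _ (Finset.mem_filter.2 ⟨hz, hz'⟩)
  obtain ⟨z, hzD, hzw⟩ := hD (.inl w) fun hw' => hw (hkept _ hw' id)
  obtain ⟨hz, hzw | hzw⟩ := not_isInnerPathVertex_and_collapsePath_of_adj_inl G u v hk hzw
  · exact absurd (hzw ▸ hkept z hzD hz) hw
  · exact ⟨_, hkept z hzD hz, hzw⟩

theorem exists_isInnerPathVertex_mem (hk : 5 ≤ k) {D : Finset (V ⊕ Fin k)}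
    (hD : isDomSet (pathAdd G u v k) D) : ∃ z ∈ D, IsInnerPathVertex k z := by
  let x₃ : V ⊕ Fin k := .inr ⟨2, by omega⟩
  by_cases hx₃ : x₃ ∈ D
  · exact ⟨x₃, hx₃, by simp only [x₃, IsInnerPathVertex]; omega⟩
  obtain ⟨z, hzD, hz⟩ := hD x₃ hx₃
  refine ⟨z, hzD, ?_⟩
  cases z with
  | inl y => simp only [x₃, pathAdd_adj_inl_inr] at hz; omega
  | inr j => simp only [x₃, pathAdd_adj_inr_inr] at hz; simp only [IsInnerPathVertex]; omega

end PathAdd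

theorem stmt18_general {V : Type*} [Fintype V] (G : SimpleGraph V) (u v : V)
    (k : ℕ) (hk : 5 ≤ k) :
    domNum G < domNum (pathAdd G u v k) := by
  classical
  obtain ⟨D, hD, hcard⟩ := exists_isDomSet_card_eq_domNum (pathAdd G u v k)
  obtain ⟨z, hzD, hz⟩ := exists_isInnerPathVertex_mem G u v hk hD
  calc domNum G
      ≤ ((D.filter (¬IsInnerPathVertex k ·)).image (collapsePath u v k)).card :=
        domNum_le_card G (isDomSet_image_collapsePath G u v (by omega) hD)
    _ ≤ (D.filter (¬IsInnerPathVertex k ·)).card := Finset.card_image_le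
    _ < D.card := Finset.card_lt_card (Finset.filter_ssubset.2 ⟨z, hzD, not_not.2 hz⟩)
    _ = domNum (pathAdd G u v k) := hcard

theorem stmt18 {V : Type*} [Fintype V] (G : SimpleGraph V) (u v : V)
    (hne : u ≠ v) (h : ¬G.Adj u v) (k : ℕ) (hk : 5 ≤ k) :
    domNum G < domNum (pathAdd G u v k) :=
  stmt18_general G u v k hk
end
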